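/- Let 1 ≤ m ≤ n with s_{n−m} > 0, and define the polynomial q(λ) = Σ_{i=m}^{n} (−1)^{n−i} (s_{n−i}/s_{n−m}) λ^i. Then for every λ ∈ ℂ with t := g_m·|λ| < 1 one has |q(λ)| ≥ |λ|^m · (1 − 2t)/(1 − t). -/

import Mathlib

/-!
Dividing by `z ^ m`, `q(z) / z ^ m = Σ_k a_k z^k` with `|a_0| = 1` and, by the definition of `g_m`,
`|a_k| ≤ g_m ^ k`. The terms with `k ≥ 1` are therefore dominated by the geometric series
`Σ_{k ≥ 1} t ^ k = t / (1 - t)`, and `1 - t / (1 - t) = (1 - 2t) / (1 - t)`.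
-/

noncomputable section

/-- The `k`-th elementary symmetric function of `σ₁, …, σ_n` (with value `1` for `k = 0`). -/
def esym (n : ℕ) (σ : Fin n → ℝ) (k : ℕ) : ℝ :=
  ∑ t ∈ Finset.univ.powersetCard k, ∏ i ∈ t, σ i

/-- `g_k = sup_{k+1 ≤ i ≤ n} (s_{n−i}/s_{n−k})^{1/(i−k)}` for `k < n`, and `g_n = 1`. -/
def gq (n : ℕ) (σ : Fin n → ℝ) (k : ℕ) : ℝ :=
  if k = n then 1
  else ⨆ j : Fin (n - k),
    (esym n σ (n - (k + 1 + (j : ℕ))) / esym n σ (n - k)) ^ ((1 : ℝ) / ((j : ℕ) + 1))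

open Finset

theorem one_sub_two_mul_div_le_norm_sum_range {𝕜 : Type*} [NormedDivisionRing 𝕜]
    (a : ℕ → 𝕜) (N : ℕ) {g : ℝ} (hg : 0 ≤ g) (ha₀ : 1 ≤ ‖a 0‖)
    (ha : ∀ k < N, ‖a (k + 1)‖ ≤ g ^ (k + 1)) (w : 𝕜) (ht : g * ‖w‖ < 1) :
    (1 - 2 * (g * ‖w‖)) / (1 - g * ‖w‖) ≤ ‖∑ k ∈ range (N + 1), a k * w ^ k‖ := by
  set t := g * ‖w‖
  have ht₀ : 0 ≤ t := mul_nonneg hg (norm_nonneg w)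
  have htail : ‖∑ k ∈ range N, a (k + 1) * w ^ (k + 1)‖ ≤ t / (1 - t) :=
    calc ‖∑ k ∈ range N, a (k + 1) * w ^ (k + 1)‖
        ≤ ∑ k ∈ range N, ‖a (k + 1) * w ^ (k + 1)‖ := norm_sum_le _ _
      _ ≤ ∑ k ∈ range N, t * t ^ k := by
        refine sum_le_sum fun k hk => ?_
        rw [norm_mul, norm_pow, ← pow_succ', mul_pow]
        exact mul_le_mul_of_nonneg_right (ha k (mem_range.mp hk)) (by positivity)
      _ ≤ t * (t ^ 0 / (1 - t)) := by
        rw [← mul_sum, range_eq_Ico]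
        exact mul_le_mul_of_nonneg_left (geom_sum_Ico_le_of_lt_one ht₀ ht) ht₀
      _ = t / (1 - t) := by ring
  have hhead : ‖a 0‖ ≤
      ‖∑ k ∈ range (N + 1), a k * w ^ k‖ + ‖∑ k ∈ range N, a (k + 1) * w ^ (k + 1)‖ := by
    rw [sum_range_succ', pow_zero, mul_one]
    exact norm_le_add_norm_add (a 0) _ |>.trans_eq (by rw [add_comm (a 0)])
  have h1t : 0 < 1 - t := by linarith
  calc (1 - 2 * t) / (1 - t) = 1 - t / (1 - t) := by field_simp; ring
    _ ≤ ‖∑ k ∈ range (N + 1), a k * w ^ k‖ := by linarith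

section ElementarySymmetric

variable {n : ℕ} {σ : Fin n → ℝ}

theorem esym_nonneg (hσ : ∀ i, 0 ≤ σ i) (k : ℕ) : 0 ≤ esym n σ k :=
  sum_nonneg fun _ _ => prod_nonneg fun i _ => hσ i

theorem gq_nonneg (hσ : ∀ i, 0 ≤ σ i) (k : ℕ) : 0 ≤ gq n σ k := by
  unfold gq
  split_ifs
  · exact zero_le_one
  · exact Real.iSup_nonneg fun _ =>
      Real.rpow_nonneg (div_nonneg (esym_nonneg hσ _) (esym_nonneg hσ _)) _

theorem esym_div_le_gq_pow (hσ : ∀ i, 0 ≤ σ i) {m j : ℕ} (hj : j < n - m) :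
    esym n σ (n - (m + 1 + j)) / esym n σ (n - m) ≤ gq n σ m ^ (j + 1) := by
  set x := esym n σ (n - (m + 1 + j)) / esym n σ (n - m)
  have hx : 0 ≤ x := div_nonneg (esym_nonneg hσ _) (esym_nonneg hσ _)
  have hroot : x ^ ((1 : ℝ) / ((j : ℝ) + 1)) ≤ gq n σ m := by
    rw [gq, if_neg (by omega)]
    exact le_ciSup (f := fun j : Fin (n - m) =>
      (esym n σ (n - (m + 1 + (j : ℕ))) / esym n σ (n - m)) ^ ((1 : ℝ) / ((j : ℕ) + 1)))
      (Set.finite_range _).bddAbove ⟨j, hj⟩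
  rw [one_div, ← Nat.cast_succ, Real.rpow_inv_le_iff_of_pos hx (gq_nonneg hσ m) (by positivity),
    Real.rpow_natCast] at hroot
  exact hroot

end ElementarySymmetric

theorem stmt1_general (n : ℕ) (σ : Fin n → ℝ)
    (hnonneg : ∀ i, 0 ≤ σ i)
    (m : ℕ) (hmn : m ≤ n) (hs : 0 < esym n σ (n - m))
    (z : ℂ) (ht : gq n σ m * ‖z‖ < 1) :
    ‖z‖ ^ m * (1 - 2 * (gq n σ m * ‖z‖)) / (1 - gq n σ m * ‖z‖) ≤
      ‖(∑ i ∈ Finset.Icc m n,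
        (-1 : ℂ) ^ (n - i) * ((esym n σ (n - i) / esym n σ (n - m) : ℝ) : ℂ) * z ^ i)‖ := by
  set c : ℕ → ℂ := fun i => (-1 : ℂ) ^ (n - i) * ((esym n σ (n - i) / esym n σ (n - m) : ℝ) : ℂ)
  have hnorm_c : ∀ i, ‖c i‖ = esym n σ (n - i) / esym n σ (n - m) := fun i => by
    simp only [c, norm_mul, norm_pow, norm_neg, norm_one, one_pow, one_mul, Complex.norm_real,
      Real.norm_eq_abs, abs_of_nonneg (div_nonneg (esym_nonneg hnonneg _) hs.le)]
  have hshift :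
      ∑ i ∈ Icc m n, c i * z ^ i = z ^ m * ∑ k ∈ range (n - m + 1), c (m + k) * z ^ k := by
    rw [← Finset.Ico_add_one_right_eq_Icc, sum_Ico_eq_sum_range, Nat.sub_add_comm hmn, mul_sum]
    exact sum_congr rfl fun k _ => by ring
  have hbound := one_sub_two_mul_div_le_norm_sum_range (fun k => c (m + k)) (n - m)
    (gq_nonneg hnonneg m) (by rw [hnorm_c, add_zero, div_self hs.ne'])
    (fun k hk => by
      rw [hnorm_c, show m + (k + 1) = m + 1 + k by omega]
      exact esym_div_le_gq_pow hnonneg hk) z ht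
  rw [hshift, norm_mul, norm_pow, mul_div_assoc]
  exact mul_le_mul_of_nonneg_left hbound (by positivity)

/-- Let `1 ≤ m ≤ n` with `s_{n−m} > 0` and let
`q(λ) = Σ_{i=m}^{n} (−1)^{n−i} (s_{n−i}/s_{n−m}) λ^i`.  Then for every `λ ∈ ℂ` with
`t := g_m·|λ| < 1` one has `|q(λ)| ≥ |λ|^m · (1 − 2t)/(1 − t)`. -/
theorem stmt1 (n : ℕ) (hn : 1 ≤ n) (σ : Fin n → ℝ)
    (hdec : Antitone σ) (hnonneg : ∀ i, 0 ≤ σ i)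
    (m : ℕ) (hm1 : 1 ≤ m) (hmn : m ≤ n) (hs : 0 < esym n σ (n - m))
    (z : ℂ) (ht : gq n σ m * ‖z‖ < 1) :
    ‖z‖ ^ m * (1 - 2 * (gq n σ m * ‖z‖)) / (1 - gq n σ m * ‖z‖) ≤
      ‖(∑ i ∈ Finset.Icc m n,
        (-1 : ℂ) ^ (n - i) * ((esym n σ (n - i) / esym n σ (n - m) : ℝ) : ℂ) * z ^ i)‖ :=
  stmt1_general n σ hnonneg m hmn hs z ht
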